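/- If y ∈ ℝ^n minimizes the sum-of-squared-distances function F, then there exist group elements g₁, …, g_N ∈ G such that ‖gᵢ xᵢ − y‖ = D(xᵢ, y) for every i (the tuple (g₁x₁, …, g_N x_N) is an optimal multiple alignment) and y is the arithmetic mean of the aligned representatives: y = (1/N) Σ_{i=1}^N gᵢ xᵢ. -/

import Mathlib

open scoped BigOperators RealInnerProductSpace

/- If `gᵢ` align every `xᵢ` optimally with the minimizer `y`, then `F(y) = ½ ∑ ‖gᵢ xᵢ − y‖²`,
while for the mean `m` of the aligned points `F(m) ≤ ½ ∑ ‖gᵢ xᵢ − m‖²` since the `gᵢ` are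
merely some alignment for `m`. By the parallel-axis identity
`∑ ‖aᵢ − y‖² = ∑ ‖aᵢ − m‖² + N ‖y − m‖²`, minimality of `y` forces `N ‖y − m‖² ≤ 0`, so
`y = m`. -/

/-- The graph distance `D(x, y) = min_{g ∈ G} ‖g x − y‖` on `ℝ^n`, where `G` is a finite
subgroup of the group of linear isometries of `ℝ^n` (e.g. permutation matrices acting by
conjugation on vectorized graph attribute matrices). -/
noncomputable def grDist {n : ℕ}
    (G : Subgroup (EuclideanSpace ℝ (Fin n) ≃ₗᵢ[ℝ] EuclideanSpace ℝ (Fin n))) [Fintype G]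
    (x y : EuclideanSpace ℝ (Fin n)) : ℝ :=
  Finset.univ.inf' Finset.univ_nonempty fun g : G => ‖g.val x - y‖

section Mean

variable {ι E : Type*} [Fintype ι] [NormedAddCommGroup E] [InnerProductSpace ℝ E]

theorem sum_norm_sub_sq_eq_sum_norm_sub_mean_sq_add (a : ι → E) (z : E) :
    ∑ i, ‖a i - z‖ ^ 2 =
      ∑ i, ‖a i - (Fintype.card ι : ℝ)⁻¹ • ∑ j, a j‖ ^ 2 +
        Fintype.card ι * ‖z - (Fintype.card ι : ℝ)⁻¹ • ∑ j, a j‖ ^ 2 := by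
  set N : ℝ := (Fintype.card ι : ℝ)
  set m := N⁻¹ • ∑ j, a j
  have hN_smul_m : N • m = ∑ j, a j := by
    rcases isEmpty_or_nonempty ι with _ | _
    · simp [N]
    · rw [smul_inv_smul₀ (Nat.cast_ne_zero.mpr Fintype.card_ne_zero)]
  have h_sum_sub_mean : ∑ i, (a i - m) = 0 := by
    rw [Finset.sum_sub_distrib, Finset.sum_const, Finset.card_univ, ← Nat.cast_smul_eq_nsmul ℝ,
      hN_smul_m, sub_self]
  calc ∑ i, ‖a i - z‖ ^ 2
      = ∑ i, (‖a i - m‖ ^ 2 + 2 * ⟪a i - m, m - z⟫ + ‖m - z‖ ^ 2) := by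
        refine Finset.sum_congr rfl fun i _ => ?_
        rw [← norm_add_sq_real, sub_add_sub_cancel]
    _ = ∑ i, ‖a i - m‖ ^ 2 + N * ‖z - m‖ ^ 2 := by
        rw [Finset.sum_add_distrib, Finset.sum_add_distrib, ← Finset.mul_sum, ← sum_inner,
          h_sum_sub_mean, inner_zero_left, Finset.sum_const, Finset.card_univ, nsmul_eq_mul,
          norm_sub_rev m z]
        ring

theorem eq_mean_of_sum_norm_sub_sq_le [Nonempty ι] {a : ι → E} {z : E}
    (h : ∑ i, ‖a i - z‖ ^ 2 ≤ ∑ i, ‖a i - (Fintype.card ι : ℝ)⁻¹ • ∑ j, a j‖ ^ 2) :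
    z = (Fintype.card ι : ℝ)⁻¹ • ∑ j, a j := by
  rw [sum_norm_sub_sq_eq_sum_norm_sub_mean_sq_add] at h
  have hN : (0 : ℝ) < Fintype.card ι := Nat.cast_pos.mpr Fintype.card_pos
  have h_sq : ‖z - (Fintype.card ι : ℝ)⁻¹ • ∑ j, a j‖ ^ 2 ≤ 0 :=
    nonpos_of_mul_nonpos_right (by linarith) hN
  rwa [sq_nonpos_iff, norm_eq_zero, sub_eq_zero] at h_sq

end Mean

section GrDist

variable {n : ℕ}
  (G : Subgroup (EuclideanSpace ℝ (Fin n) ≃ₗᵢ[ℝ] EuclideanSpace ℝ (Fin n)))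

theorem norm_inv_apply_sub (x y : EuclideanSpace ℝ (Fin n)) (g : G) :
    ‖(g⁻¹ : G).val x - y‖ = ‖g.val y - x‖ := by
  rw [← g.val.norm_map, map_sub, norm_sub_rev]
  simp

variable [Fintype G]

theorem grDist_nonneg (x y : EuclideanSpace ℝ (Fin n)) : 0 ≤ grDist G x y :=
  Finset.le_inf' _ _ fun _ _ => norm_nonneg _

theorem grDist_le_norm_sub (x y : EuclideanSpace ℝ (Fin n)) (g : G) :
    grDist G x y ≤ ‖g.val x - y‖ :=
  Finset.inf'_le _ (Finset.mem_univ g)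

theorem exists_norm_sub_eq_grDist (x y : EuclideanSpace ℝ (Fin n)) :
    ∃ g : G, ‖g.val x - y‖ = grDist G x y := by
  obtain ⟨g, -, hg⟩ := Finset.exists_mem_eq_inf' Finset.univ_nonempty fun g : G => ‖g.val x - y‖
  exact ⟨g, hg.symm⟩

theorem grDist_comm (x y : EuclideanSpace ℝ (Fin n)) : grDist G x y = grDist G y x := by
  have key : ∀ a b, grDist G a b ≤ grDist G b a := fun a b => by
    obtain ⟨g, hg⟩ := exists_norm_sub_eq_grDist G b a
    calc grDist G a b ≤ ‖(g⁻¹ : G).val a - b‖ := grDist_le_norm_sub G a b g⁻¹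
      _ = grDist G b a := by rw [norm_inv_apply_sub, hg]
  exact le_antisymm (key x y) (key y x)

end GrDist

/-- if `y` minimizes the sum-of-squared-distances function `F`, then there
are group elements `gᵢ ∈ G` realizing the distances (`‖gᵢ xᵢ − y‖ = D(xᵢ, y)`, an optimal
multiple alignment), and `y` is the arithmetic mean of the aligned representatives. -/
theorem sample_mean_is_mean_of_optimal_alignment {n : ℕ}
    (G : Subgroup (EuclideanSpace ℝ (Fin n) ≃ₗᵢ[ℝ] EuclideanSpace ℝ (Fin n))) [Fintype G]
    (N : ℕ) (hN : 0 < N) (x : Fin N → EuclideanSpace ℝ (Fin n))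
    (y : EuclideanSpace ℝ (Fin n))
    (hmin : ∀ z : EuclideanSpace ℝ (Fin n),
      (1 / 2 : ℝ) * ∑ i, grDist G y (x i) ^ 2 ≤ (1 / 2 : ℝ) * ∑ i, grDist G z (x i) ^ 2) :
    ∃ g : Fin N → G,
      (∀ i, ‖(g i).val (x i) - y‖ = grDist G (x i) y) ∧
      y = (N : ℝ)⁻¹ • ∑ i, (g i).val (x i) := by
  choose g hg using fun i => exists_norm_sub_eq_grDist G (x i) y
  refine ⟨g, hg, ?_⟩
  have : Nonempty (Fin N) := Fin.pos_iff_nonempty.mp hN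
  set m := (N : ℝ)⁻¹ • ∑ i, (g i).val (x i)
  have h_at_y : ∀ i, grDist G y (x i) = ‖(g i).val (x i) - y‖ := fun i => by
    rw [grDist_comm, hg]
  have h_at_m : ∀ i, grDist G m (x i) ≤ ‖(g i).val (x i) - m‖ := fun i => by
    rw [grDist_comm]
    exact grDist_le_norm_sub G (x i) m (g i)
  have h_le : ∑ i, ‖(g i).val (x i) - y‖ ^ 2 ≤ ∑ i, ‖(g i).val (x i) - m‖ ^ 2 :=
    calc ∑ i, ‖(g i).val (x i) - y‖ ^ 2 = ∑ i, grDist G y (x i) ^ 2 := by simp only [h_at_y]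
      _ ≤ ∑ i, grDist G m (x i) ^ 2 := by linarith [hmin m]
      _ ≤ ∑ i, ‖(g i).val (x i) - m‖ ^ 2 := Finset.sum_le_sum fun i _ =>
          pow_le_pow_left₀ (grDist_nonneg G m (x i)) (h_at_m i) 2
  have h_mean := eq_mean_of_sum_norm_sub_sq_le (a := fun i => (g i).val (x i)) (z := y)
    (by rwa [Fintype.card_fin])
  rwa [Fintype.card_fin] at h_mean
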